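/- Let R be a finite field equipped with the discrete topology, Γ a set with at least two elements, φ: Γ → Γ a map, and w ∈ R^Γ a weight vector. Suppose ν ∈ Γ is a non-quasi-periodic point of φ with w_{φ^n(ν)} ≠ 0 for all n ≥ 0. If E, F ⊆ ℕ∪{0} and E \ F is infinite, then the pair (x^E, x^F) is not asymptotic for σ_{φ,w}. -/
import Mathlib


open Function Set

namespace WGShift

variable {Γ R : Type*}

/-- The basic entourage `O_M` determined by a set of coordinates `M ⊆ Γ`. -/
def shiftOM (M : Set Γ) : Set ((Γ → R) × (Γ → R)) :=
  {p | ∀ α ∈ M, p.1 α = p.2 α}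

/-- Entourages of the product uniformity on `Γ → R` (with `R` discrete):
exactly the sets containing some `O_M` with `M` finite. -/
def IsEntourage (O : Set ((Γ → R) × (Γ → R))) : Prop :=
  ∃ M : Set Γ, M.Finite ∧ shiftOM M ⊆ O

/-- The weighted generalized shift `σ_{φ,w}`. -/
def wshift [Mul R] (φ : Γ → Γ) (w : Γ → R) : (Γ → R) → (Γ → R) :=
  fun x α => w α * x (φ α)

/-- `α` is quasi-periodic under `φ` if `φ^i α = φ^j α` for some `i > j ≥ 1`. -/
def IsQuasiPeriodic (φ : Γ → Γ) (α : Γ) : Prop :=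
  ∃ i j : ℕ, 1 ≤ j ∧ j < i ∧ φ^[i] α = φ^[j] α

/-- Sensitivity of `(R^Γ, f)` with respect to the product uniformity. -/
def Sensitive [TopologicalSpace R] (f : (Γ → R) → (Γ → R)) : Prop :=
  ∃ O : Set ((Γ → R) × (Γ → R)), IsEntourage O ∧
    ∀ x : Γ → R, ∀ U : Set (Γ → R), IsOpen U → x ∈ U →
      ∃ y ∈ U, ∃ n : ℕ, (f^[n] x, f^[n] y) ∉ O

/-- Strong sensitivity of `(R^Γ, f)` with respect to the product uniformity. -/
def StronglySensitive [TopologicalSpace R] (f : (Γ → R) → (Γ → R)) : Prop :=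
  ∃ O : Set ((Γ → R) × (Γ → R)), IsEntourage O ∧
    ∀ x : Γ → R, ∀ U : Set (Γ → R), IsOpen U → x ∈ U →
      ∃ y ∈ U, ∃ N : ℕ, ∀ n ≥ N, (f^[n] x, f^[n] y) ∉ O

/-- `x, y` are proximal for `f`. -/
def ProximalPair (f : (Γ → R) → (Γ → R)) (x y : Γ → R) : Prop :=
  ∀ O : Set ((Γ → R) × (Γ → R)), IsEntourage O →
    ∃ n ≥ 1, (f^[n] x, f^[n] y) ∈ O

/-- `x, y` are asymptotic for `f`. -/
def AsymptoticPair (f : (Γ → R) → (Γ → R)) (x y : Γ → R) : Prop :=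
  ∀ O : Set ((Γ → R) × (Γ → R)), IsEntourage O →
    ∃ N ≥ 1, ∀ n ≥ N, (f^[n] x, f^[n] y) ∈ O

/-- A scrambled pair: proximal but not asymptotic. -/
def ScrambledPair (f : (Γ → R) → (Γ → R)) (x y : Γ → R) : Prop :=
  ProximalPair f x y ∧ ¬ AsymptoticPair f x y

/-- Li–Yorke chaos: existence of an uncountable scrambled set. -/
def LiYorkeChaotic (f : (Γ → R) → (Γ → R)) : Prop :=
  ∃ A : Set (Γ → R), ¬ A.Countable ∧
    ∀ x ∈ A, ∀ y ∈ A, x ≠ y → ScrambledPair f x y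

/-- Topological transitivity of `(R^Γ, f)`. -/
def TopTransitive [TopologicalSpace R] (f : (Γ → R) → (Γ → R)) : Prop :=
  ∀ U V : Set (Γ → R), IsOpen U → IsOpen V → U.Nonempty → V.Nonempty →
    ∃ n ≥ 1, (f^[n] '' U ∩ V).Nonempty

/-- The set of periodic points of `f`. -/
def perPoints (f : (Γ → R) → (Γ → R)) : Set (Γ → R) :=
  {x | ∃ n ≥ 1, f^[n] x = x}

/-- Devaney chaos: sensitive, topologically transitive, dense periodic points. -/
def DevaneyChaotic [TopologicalSpace R] (f : (Γ → R) → (Γ → R)) : Prop :=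
  Sensitive f ∧ TopTransitive f ∧ Dense (perPoints f)

open Classical in
/-- The point `x^A ∈ R^Γ` built from `A ⊆ ℕ` along the orbit of `ν`. -/
noncomputable def xA [Zero R] [One R] (φ : Γ → Γ) (ν : Γ) (A : Set ℕ) : Γ → R :=
  fun α => if ∃ p : ℕ, p ∈ A ∧ α = φ^[p * (p + 1) / 2] ν then 1 else 0

end WGShift

open WGShift

lemma wshift_iter {R Γ : Type*} [CommRing R] (φ : Γ → Γ) (w : Γ → R)
    (n : ℕ) (x : Γ → R) (α : Γ) :
    (wshift φ w)^[n] x α = (∏ k ∈ Finset.range n, w (φ^[k] α)) * x (φ^[n] α) := by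
  induction n generalizing x with
  | zero => simp
  | succ n ih =>
    rw [Function.iterate_succ_apply, ih, Finset.prod_range_succ]
    simp only [wshift, Function.iterate_succ_apply']
    ring

lemma orbit_inj {Γ : Type*} {φ : Γ → Γ} {ν : Γ} (hν : ¬ IsQuasiPeriodic φ ν)
    {i j : ℕ} (h : φ^[i] ν = φ^[j] ν) : i = j := by
  by_contra hne
  rcases Nat.lt_or_ge i j with hlt | hge
  · exact hν ⟨j + 1, i + 1, by omega, by omega, by
      rw [Function.iterate_succ_apply', Function.iterate_succ_apply', h]⟩
  · have hlt : j < i := lt_of_le_of_ne hge (Ne.symm hne)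
    exact hν ⟨i + 1, j + 1, by omega, by omega, by
      rw [Function.iterate_succ_apply', Function.iterate_succ_apply', h]⟩

lemma tri_succ (p : ℕ) : (p + 1) * (p + 2) / 2 = p * (p + 1) / 2 + (p + 1) := by
  have h : (p + 1) * (p + 2) = p * (p + 1) + (p + 1) * 2 := by ring
  rw [h, Nat.add_mul_div_right _ _ (by norm_num : 0 < 2)]

lemma tri_strictMono : StrictMono (fun p : ℕ => p * (p + 1) / 2) := by
  apply strictMono_nat_of_lt_succ
  intro p
  show p * (p + 1) / 2 < (p + 1) * (p + 1 + 1) / 2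
  rw [show p + 1 + 1 = p + 2 from rfl, tri_succ]
  exact Nat.lt_add_of_pos_right (Nat.succ_pos p)

lemma tri_ge (p : ℕ) : p ≤ p * (p + 1) / 2 := by
  induction p with
  | zero => simp
  | succ n ih =>
    rw [show n + 1 + 1 = n + 2 from rfl, tri_succ]
    exact Nat.le_add_left (n + 1) _

theorem stmt7 {R Γ : Type*} [Field R] [Fintype R]
    [TopologicalSpace R] [DiscreteTopology R] [Nontrivial Γ]
    (φ : Γ → Γ) (w : Γ → R) (ν : Γ)
    (hν : ¬ IsQuasiPeriodic φ ν) (hw : ∀ n : ℕ, w (φ^[n] ν) ≠ 0)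
    (E F : Set ℕ) (hEF : (E \ F).Infinite) :
    ¬ AsymptoticPair (wshift φ w) (xA φ ν E) (xA φ ν F) := by
  intro h
  obtain ⟨N, -, hN⟩ := h (shiftOM {ν}) ⟨{ν}, Set.finite_singleton ν, subset_rfl⟩
  obtain ⟨p, hpEF, hpN⟩ := hEF.exists_gt N
  set T := p * (p + 1) / 2 with hT
  have hTN : N ≤ T := le_trans (le_of_lt hpN) (tri_ge p)
  have key := hN T hTN ν rfl
  dsimp only at key
  rw [wshift_iter, wshift_iter] at key
  have hprod : (∏ k ∈ Finset.range T, w (φ^[k] ν)) ≠ 0 :=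
    Finset.prod_ne_zero_iff.mpr fun k _ => hw k
  have hxy : xA φ ν E (φ^[T] ν) = xA φ ν F (φ^[T] ν) :=
    mul_left_cancel₀ hprod key
  have hE1 : xA φ ν E (φ^[T] ν) = (1 : R) := by
    simp only [xA, if_pos]
    exact if_pos ⟨p, hpEF.1, rfl⟩
  have hF0 : xA φ ν F (φ^[T] ν) = (0 : R) := by
    simp only [xA]
    rw [if_neg]
    rintro ⟨q, hqF, hq⟩
    have := orbit_inj hν hq
    have := tri_strictMono.injective this
    exact hpEF.2 (this ▸ hqF)
  exact one_ne_zero (hE1.symm.trans (hxy.trans hF0))
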